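/- arXiv:2401.10700 — 6 statements merged into one kernel-verified Lean document; each statement's English description precedes it below -/
import Mathlib

section
/- The fixed point Q_{h,γ}* of the γ-discounted feasible Bellman operator converges pointwise, as γ → 1, to the undiscounted optimal feasible value Q_h*(s,a) = min_π max_{t∈ℕ} h(s_t) with s_0 = s, a_0 = a, in a finite deterministic MDP. -/
/-- Trajectory induced by a deterministic policy `π` and transition `T` from state `s`. -/
def traj {S A : Type*} (T : S → A → S) (π : S → A) (s : S) : ℕ → S
  | 0 => s
  | t + 1 => T (traj T π s t) (π (traj T π s t))

/-- Trajectory starting with `s₀ = s`, `a₀ = a`, following policy `π` afterwards. -/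
def trajA {S A : Type*} (T : S → A → S) (π : S → A) (s : S) (a : A) : ℕ → S
  | 0 => s
  | t + 1 => traj T π (T s a) t

/-!
Along the trajectory of any policy, the fixed point gives a sequence `q` with
`q t ≤ (1 - γ) h_t + γ max h_t q_{t+1}`; any excess of `sup q` over `sup h_t` would be contracted
by `γ < 1`, so `Q_γ ≤ Q*`. Along the greedy policy this is an equality, and unrolling it gives
`γ ^ t (h_t - m) ≤ Q_γ(s, a) - m` for any lower bound `m` of `h`. As there are finitely many
policies and each trajectory visits finitely many states, the maxima of `h` along all trajectories
are reached before a time `N` independent of `γ`, whence `m + γ ^ N (Q* - m) ≤ Q_γ(s, a) ≤ Q*`.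
-/

section DiscountedMaxRecursion

variable {γ : ℝ} {x q : ℕ → ℝ}

theorem le_of_forall_le_discounted_max {M : ℝ} (hγ0 : 0 ≤ γ) (hγ1 : γ < 1)
    (hx : ∀ t, x t ≤ M) (hq : BddAbove (Set.range q))
    (hrec : ∀ t, q t ≤ (1 - γ) * x t + γ * max (x t) (q (t + 1))) (t : ℕ) :
    q t ≤ M := by
  have h1γ : 0 ≤ 1 - γ := by linarith
  have hU : ⨆ t, q t ≤ (1 - γ) * M + γ * max M (⨆ t, q t) := by
    refine ciSup_le fun t => (hrec t).trans ?_
    gcongr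
    exacts [hx t, hx t, le_ciSup hq (t + 1)]
  have hUM : ⨆ t, q t ≤ M := by
    rcases le_total M (⨆ t, q t) with hle | hle
    · rw [max_eq_right hle] at hU
      nlinarith
    · exact hle
  exact (le_ciSup hq t).trans hUM

theorem pow_mul_sub_le_of_discounted_max_le {m : ℝ} (hγ0 : 0 ≤ γ) (hγ1 : γ ≤ 1)
    (hx : ∀ t, m ≤ x t) (hrec : ∀ t, (1 - γ) * x t + γ * max (x t) (q (t + 1)) ≤ q t)
    (t : ℕ) : γ ^ t * (x t - m) ≤ q 0 - m := by
  have hxq : ∀ t, x t ≤ q t := fun t => by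
    nlinarith [hrec t, le_max_left (x t) (q (t + 1)), mul_nonneg hγ0 (sub_nonneg.2 (hx t))]
  have hstep : ∀ t, γ * (q (t + 1) - m) ≤ q t - m := fun t => by
    nlinarith [hrec t, le_max_right (x t) (q (t + 1)),
      mul_nonneg (sub_nonneg.2 hγ1) (sub_nonneg.2 (hx t))]
  have hunroll : ∀ t, γ ^ t * (q t - m) ≤ q 0 - m := by
    intro t
    induction t with
    | zero => simp
    | succ t ih =>
      calc γ ^ (t + 1) * (q (t + 1) - m) = γ ^ t * (γ * (q (t + 1) - m)) := by ring
        _ ≤ γ ^ t * (q t - m) := by gcongr; exact hstep t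
        _ ≤ q 0 - m := ih
  calc γ ^ t * (x t - m) ≤ γ ^ t * (q t - m) := by gcongr; exact hxq t
    _ ≤ q 0 - m := hunroll t

end DiscountedMaxRecursion

section FeasibleBellman

variable {S A : Type*} (T : S → A → S)

def actA (π : S → A) (s : S) (a : A) : ℕ → A
  | 0 => a
  | t + 1 => π (trajA T π s a (t + 1))

theorem trajA_succ (π : S → A) (s : S) (a : A) (t : ℕ) :
    trajA T π s a (t + 1) = T (trajA T π s a t) (actA T π s a t) := by
  cases t <;> rfl

theorem exists_uniform_bound_argmax_trajA [Finite S] [Finite A] (h : S → ℝ) (s : S) (a : A) :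
    ∃ N, ∀ π : S → A, ∃ t ≤ N, ∀ t', h (trajA T π s a t') ≤ h (trajA T π s a t) := by
  have hmax : ∀ π : S → A, ∃ t, ∀ t', h (trajA T π s a t') ≤ h (trajA T π s a t) := by
    intro π
    obtain ⟨_, ⟨t, rfl⟩, ht⟩ :=
      Set.exists_max_image _ h (Set.toFinite _) (Set.range_nonempty (trajA T π s a))
    exact ⟨t, fun t' => ht _ ⟨t', rfl⟩⟩
  choose τ hτ using hmax
  obtain ⟨N, hN⟩ := (Set.finite_range τ).bddAbove
  exact ⟨N, fun π => ⟨τ π, hN ⟨π, rfl⟩, hτ π⟩⟩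

def IsFeasibleBellmanFixedPt (h : S → ℝ) (γ : ℝ) (Q : S → A → ℝ) : Prop :=
  ∀ s a, Q s a = (1 - γ) * h s + γ * max (h s) (⨅ a' : A, Q (T s a) a')

variable {T} {h : S → ℝ} {γ : ℝ} {Q : S → A → ℝ}

theorem IsFeasibleBellmanFixedPt.apply_trajA (hQ : IsFeasibleBellmanFixedPt T h γ Q) (π : S → A)
    (s : S) (a : A) (t : ℕ) :
    Q (trajA T π s a t) (actA T π s a t) = (1 - γ) * h (trajA T π s a t) +
      γ * max (h (trajA T π s a t)) (⨅ a' : A, Q (trajA T π s a (t + 1)) a') := by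
  rw [trajA_succ]
  exact hQ _ _

theorem IsFeasibleBellmanFixedPt.le_iSup_trajA [Finite S] [Finite A]
    (hQ : IsFeasibleBellmanFixedPt T h γ Q) (hγ0 : 0 ≤ γ) (hγ1 : γ < 1)
    (π : S → A) (s : S) (a : A) :
    Q s a ≤ ⨆ t, h (trajA T π s a t) := by
  have hh : BddAbove (Set.range fun t => h (trajA T π s a t)) :=
    (Finite.bddAbove_range h).mono (Set.range_comp_subset_range _ h)
  have hq : BddAbove (Set.range fun t => Q (trajA T π s a t) (actA T π s a t)) :=
    (Finite.bddAbove_range (Function.uncurry Q)).mono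
      (Set.range_comp_subset_range (fun t => (trajA T π s a t, actA T π s a t))
        (Function.uncurry Q))
  refine le_of_forall_le_discounted_max hγ0 hγ1 (le_ciSup hh) hq (fun t => ?_) 0
  rw [hQ.apply_trajA]
  gcongr
  exact ciInf_le (Finite.bddBelow_range _) _

theorem IsFeasibleBellmanFixedPt.exists_pow_mul_sub_le [Finite A] [Nonempty A]
    (hQ : IsFeasibleBellmanFixedPt T h γ Q) (hγ0 : 0 ≤ γ) (hγ1 : γ ≤ 1)
    {m : ℝ} (hm : ∀ x, m ≤ h x) (s : S) (a : A) :
    ∃ π : S → A, ∀ t, γ ^ t * (h (trajA T π s a t) - m) ≤ Q s a - m := by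
  choose π hπ using fun x => Finite.exists_min (Q x)
  have hgreedy : ∀ x, ⨅ a' : A, Q x a' = Q x (π x) := fun x =>
    le_antisymm (ciInf_le (Finite.bddBelow_range _) _) (le_ciInf (hπ x))
  refine ⟨π, pow_mul_sub_le_of_discounted_max_le (q := fun t => Q (trajA T π s a t)
    (actA T π s a t)) hγ0 hγ1 (fun t => hm _) (fun t => ?_)⟩
  rw [hQ.apply_trajA π s a t, hgreedy]
  rfl

theorem IsFeasibleBellmanFixedPt.add_pow_mul_le [Finite S] [Finite A] [Nonempty A]
    (hQ : IsFeasibleBellmanFixedPt T h γ Q) (hγ0 : 0 ≤ γ) (hγ1 : γ ≤ 1)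
    {m : ℝ} (hm : ∀ x, m ≤ h x) {s : S} {a : A} {N : ℕ}
    (hN : ∀ π : S → A, ∃ t ≤ N, ∀ t', h (trajA T π s a t') ≤ h (trajA T π s a t)) :
    m + γ ^ N * ((⨅ π : S → A, ⨆ t, h (trajA T π s a t)) - m) ≤ Q s a := by
  obtain ⟨π, hπ⟩ := hQ.exists_pow_mul_sub_le hγ0 hγ1 hm s a
  obtain ⟨t, htN, hmax⟩ := hN π
  have hV : ⨆ t, h (trajA T π s a t) = h (trajA T π s a t) :=
    le_antisymm (ciSup_le hmax) (le_ciSup ⟨_, Set.forall_mem_range.2 hmax⟩ t)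
  calc m + γ ^ N * ((⨅ π : S → A, ⨆ t, h (trajA T π s a t)) - m)
      ≤ m + γ ^ N * (h (trajA T π s a t) - m) := by
        gcongr
        exact hV ▸ ciInf_le (Finite.bddBelow_range _) π
    _ ≤ m + γ ^ t * (h (trajA T π s a t) - m) := by
        gcongr m + ?_ * _
        · exact sub_nonneg.2 (hm _)
        · exact pow_le_pow_of_le_one hγ0 hγ1 htN
    _ ≤ Q s a := by linarith [hπ t]

end FeasibleBellman

theorem stmt5_general {S A : Type*} [Fintype S] [Fintype A]
    (T : S → A → S) (h : S → ℝ)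
    (Qfix : ℝ → S → A → ℝ)
    (hfix : ∀ γ ∈ Set.Ioo (0 : ℝ) 1, ∀ s a,
      Qfix γ s a = (1 - γ) * h s + γ * max (h s) (⨅ a' : A, Qfix γ (T s a) a'))
    (s : S) (a : A) :
    Filter.Tendsto (fun γ => Qfix γ s a) (nhdsWithin 1 (Set.Ioo (0 : ℝ) 1))
      (nhds (⨅ π : S → A, ⨆ t : ℕ, h (trajA T π s a t))) := by
  have : Nonempty A := ⟨a⟩
  have hQ : ∀ γ ∈ Set.Ioo (0 : ℝ) 1, IsFeasibleBellmanFixedPt T h γ (Qfix γ) := hfix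
  set Qstar := ⨅ π : S → A, ⨆ t : ℕ, h (trajA T π s a t)
  obtain ⟨m, hm⟩ := Finite.bddBelow_range h
  obtain ⟨N, hN⟩ := exists_uniform_bound_argmax_trajA T h s a
  have hlower : Filter.Tendsto (fun γ : ℝ => m + γ ^ N * (Qstar - m))
      (nhdsWithin 1 (Set.Ioo (0 : ℝ) 1)) (nhds Qstar) := by
    have hcont : Continuous fun γ : ℝ => m + γ ^ N * (Qstar - m) := by fun_prop
    simpa using (hcont.tendsto 1).mono_left nhdsWithin_le_nhds
  refine tendsto_of_tendsto_of_tendsto_of_le_of_le' hlower tendsto_const_nhds ?_ ?_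
    <;> filter_upwards [self_mem_nhdsWithin] with γ hγ
  · exact (hQ γ hγ).add_pow_mul_le hγ.1.le hγ.2.le (fun x => hm ⟨x, rfl⟩) hN
  · exact le_ciInf fun π => (hQ γ hγ).le_iSup_trajA hγ.1.le hγ.2 π s a

/-- The fixed point `Q_{h,γ}*` of the γ-discounted feasible Bellman operator converges pointwise
as `γ → 1` to the undiscounted optimal feasible value
`Q_h*(s,a) = min_π max_t h(s_t)` in a finite deterministic MDP. -/
theorem stmt5 {S A : Type*} [Fintype S] [Nonempty S] [Fintype A] [Nonempty A]
    (T : S → A → S) (h : S → ℝ)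
    (Qfix : ℝ → S → A → ℝ)
    (hfix : ∀ γ ∈ Set.Ioo (0 : ℝ) 1, ∀ s a,
      Qfix γ s a = (1 - γ) * h s + γ * max (h s) (⨅ a' : A, Qfix γ (T s a) a'))
    (s : S) (a : A) :
    Filter.Tendsto (fun γ => Qfix γ s a) (nhdsWithin 1 (Set.Ioo (0 : ℝ) 1))
      (nhds (⨅ π : S → A, ⨆ t : ℕ, h (trajA T π s a t))) :=
  stmt5_general T h Qfix hfix s a
end

section
/- The solution to max_π E_{a∼π}[A_r(s,a)] − μ·D_KL(π ‖ π_β) subject to the support constraint ∫_{{a : Q_h(s,a) ≤ 0}} π(a|s) da = 1, with μ > 0, is π*(a|s) ∝ π_β(a|s) exp(A_r(s,a)/μ) · 𝟙[Q_h(s,a) ≤ 0], assuming π_β assigns positive mass to the set {a : Q_h(s,a) ≤ 0}. -/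
/-!
With `g = π_β · exp (A_r / μ) · 𝟙[Q_h ≤ 0]` and `Z = ∫ g`, the tilted density `π* = g / Z` makes
`log (π* / π_β) = A_r / μ - log Z` wherever `π* > 0`, so its objective value is exactly `μ log Z`.
For any feasible `π`, on `{π > 0}` (which lies a.e. in `{Q_h ≤ 0} ∩ {π_β > 0}`) the objective
integrand equals `μ π log (π* / π) + μ log Z · π`, and Gibbs' inequality `p log (q / p) ≤ q - p`
bounds it by `μ (π* - π) + μ log Z · π`, whose integral is `μ log Z`.
-/

open MeasureTheory

theorem Real.mul_log_div_le_sub {p q : ℝ} (hp : 0 < p) (hq : 0 < q) :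
    p * Real.log (q / p) ≤ q - p := by
  calc p * Real.log (q / p) ≤ p * (q / p - 1) :=
        mul_le_mul_of_nonneg_left (Real.log_le_sub_one_of_pos (div_pos hq hp)) hp.le
    _ = q - p := by field_simp

theorem Real.mul_sub_mul_mul_log_div_le {p b a t Z : ℝ} (hp : 0 < p) (hb : 0 < b) (ht : 0 < t)
    (hZ : 0 < Z) :
    p * a - t * (p * Real.log (p / b))
      ≤ t * (b * Real.exp (a / t) / Z - p) + t * Real.log Z * p := by
  have hq : 0 < b * Real.exp (a / t) / Z := by positivity
  have hlog : p * a - t * (p * Real.log (p / b)) - t * Real.log Z * p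
      = t * (p * Real.log (b * Real.exp (a / t) / Z / p)) := by
    rw [Real.log_div hq.ne' hp.ne', Real.log_div (by positivity) hZ.ne',
      Real.log_mul hb.ne' (Real.exp_pos _).ne', Real.log_exp, Real.log_div hp.ne' hb.ne']
    field_simp
    ring
  have hgibbs := mul_le_mul_of_nonneg_left (Real.mul_log_div_le_sub hp hq) ht.le
  linarith

theorem ae_notMem_eq_zero_of_setIntegral_eq_integral {α : Type*} [MeasurableSpace α]
    {μ : Measure α} {f : α → ℝ} {s : Set α} (hf : 0 ≤ᵐ[μ] f) (hfi : Integrable f μ)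
    (hs : MeasurableSet s) (h : ∫ a in s, f a ∂μ = ∫ a, f a ∂μ) : ∀ᵐ a ∂μ, a ∉ s → f a = 0 := by
  have hcompl : ∫ a in sᶜ, f a ∂μ = 0 := by linarith [integral_add_compl hs hfi]
  exact (ae_restrict_iff' hs.compl).mp
    ((setIntegral_eq_zero_iff_of_nonneg_ae (ae_restrict_of_ae hf) hfi.integrableOn).mp hcompl)

noncomputable section

variable {α : Type*}

def gibbsWeight (w f : α → ℝ) (t : ℝ) (s : Set α) : α → ℝ :=
  s.indicator fun a => w a * Real.exp (f a / t)

theorem gibbsWeight_nonneg {w f : α → ℝ} {t : ℝ} {s : Set α} (hw : ∀ a, 0 ≤ w a) (a : α) :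
    0 ≤ gibbsWeight w f t s a :=
  Set.indicator_nonneg (fun a _ => mul_nonneg (hw a) (Real.exp_pos _).le) a

variable [MeasurableSpace α]

def klRegularizedObjective (μ : Measure α) (w f : α → ℝ) (t : ℝ) (π : α → ℝ) : ℝ :=
  (∫ a, π a * f a ∂μ) - t * ∫ a, π a * Real.log (π a / w a) ∂μ

variable {μ : Measure α} {w f : α → ℝ} {t : ℝ} {s : Set α}

theorem integrable_gibbsWeight (hw : Integrable w μ) (hf : Measurable f) {M : ℝ}
    (hM : ∀ a, |f a| ≤ M) (ht : 0 < t) (hs : MeasurableSet s) :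
    Integrable (gibbsWeight w f t s) μ := by
  refine (hw.mul_bdd (c := Real.exp (M / t)) (hf.div_const t).exp.aestronglyMeasurable
    (ae_of_all _ fun a => ?_)).indicator hs
  rw [Real.norm_of_nonneg (Real.exp_pos _).le]
  gcongr
  exact le_of_abs_le (hM a)

theorem integral_gibbsWeight_pos (hw : ∀ a, 0 ≤ w a) (hg : Integrable (gibbsWeight w f t s) μ)
    (hmass : 0 < ∫ a in s, w a ∂μ) : 0 < ∫ a, gibbsWeight w f t s a ∂μ := by
  have hsupp : (Function.support fun a => w a * Real.exp (f a / t)) = Function.support w := by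
    ext a
    simp [(Real.exp_pos _).ne']
  rw [setIntegral_pos_iff_support_of_nonneg_ae (ae_of_all _ hw)
    (Integrable.of_integral_ne_zero hmass.ne')] at hmass
  rwa [integral_pos_iff_support_of_nonneg (gibbsWeight_nonneg hw) hg, gibbsWeight,
    Set.support_indicator, hsupp, Set.inter_comm]

theorem klRegularizedObjective_gibbsWeight_div_integral (ht : t ≠ 0)
    (hg : Integrable (gibbsWeight w f t s) μ) (hZ : ∫ a, gibbsWeight w f t s a ∂μ ≠ 0)
    (hf : Measurable f) {M : ℝ} (hM : ∀ a, |f a| ≤ M) :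
    klRegularizedObjective μ w f t (fun a => gibbsWeight w f t s a / ∫ a, gibbsWeight w f t s a ∂μ)
      = t * Real.log (∫ a, gibbsWeight w f t s a ∂μ) := by
  set Z := ∫ a, gibbsWeight w f t s a ∂μ
  set q := fun a => gibbsWeight w f t s a / Z
  have hq : Integrable q μ := hg.div_const Z
  have hqf : Integrable (fun a => q a * f a) μ :=
    hq.mul_bdd hf.aestronglyMeasurable (ae_of_all _ fun a => (Real.norm_eq_abs _).trans_le (hM a))
  have hq1 : ∫ a, q a ∂μ = 1 := by rw [integral_div, div_self hZ]
  have hlog : ∀ a, q a * Real.log (q a / w a) = q a * f a / t - Real.log Z * q a := by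
    intro a
    by_cases hqa : a ∈ s ∧ w a ≠ 0
    · have hdiv : q a / w a = Real.exp (f a / t) / Z := by
        have hwa := hqa.2
        simp only [q, gibbsWeight, Set.indicator_of_mem hqa.1]
        field_simp
      rw [hdiv, Real.log_div (Real.exp_pos _).ne' hZ, Real.log_exp]
      field_simp
    · have hq0 : q a = 0 := by
        by_cases has : a ∈ s
        · simp [q, gibbsWeight, Set.indicator_of_mem has, not_and_not_right.mp hqa has]
        · simp [q, gibbsWeight, Set.indicator_of_notMem has]
      simp [hq0]
  have hkl : ∫ a, q a * Real.log (q a / w a) ∂μ = (∫ a, q a * f a ∂μ) / t - Real.log Z := by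
    simp_rw [hlog]
    rw [integral_sub (hqf.div_const t) (hq.const_mul _), integral_div, integral_const_mul, hq1,
      mul_one]
  rw [klRegularizedObjective, hkl]
  field_simp
  ring

theorem klRegularizedObjective_le_mul_log_integral_gibbsWeight (ht : 0 < t) (hw : ∀ a, 0 ≤ w a)
    (hg : Integrable (gibbsWeight w f t s) μ) (hZ : 0 < ∫ a, gibbsWeight w f t s a ∂μ)
    {π : α → ℝ} (hπ : ∀ a, 0 ≤ π a) (hπi : Integrable π μ) (hπ1 : ∫ a, π a ∂μ = 1)
    (hπs : ∀ᵐ a ∂μ, a ∉ s → π a = 0) (hπw : ∀ a, w a = 0 → π a = 0)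
    (hπf : Integrable (fun a => π a * f a) μ)
    (hπkl : Integrable (fun a => π a * Real.log (π a / w a)) μ) :
    klRegularizedObjective μ w f t π ≤ t * Real.log (∫ a, gibbsWeight w f t s a ∂μ) := by
  set Z := ∫ a, gibbsWeight w f t s a ∂μ
  have hgπ : Integrable (fun a => t * (gibbsWeight w f t s a / Z - π a)) μ :=
    ((hg.div_const Z).sub hπi).const_mul t
  have hpt : ∀ᵐ a ∂μ, π a * f a - t * (π a * Real.log (π a / w a))
      ≤ t * (gibbsWeight w f t s a / Z - π a) + t * Real.log Z * π a := by
    filter_upwards [hπs] with a ha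
    rcases (hπ a).eq_or_lt with h0 | hpos
    · have hg0 := gibbsWeight_nonneg (f := f) (t := t) (s := s) hw a
      rw [← h0]
      simp only [zero_mul, mul_zero, sub_zero, add_zero]
      positivity
    · have has : a ∈ s := by
        by_contra h
        exact hpos.ne' (ha h)
      have hwa : 0 < w a := (hw a).lt_of_ne fun h => hpos.ne' (hπw a h.symm)
      rw [gibbsWeight, Set.indicator_of_mem has]
      exact Real.mul_sub_mul_mul_log_div_le hpos hwa ht hZ
  calc klRegularizedObjective μ w f t π
      = ∫ a, (π a * f a - t * (π a * Real.log (π a / w a))) ∂μ := by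
        rw [klRegularizedObjective, integral_sub hπf (hπkl.const_mul t), integral_const_mul]
    _ ≤ ∫ a, (t * (gibbsWeight w f t s a / Z - π a) + t * Real.log Z * π a) ∂μ :=
        integral_mono_ae (hπf.sub (hπkl.const_mul t)) (hgπ.add (hπi.const_mul _)) hpt
    _ = t * Real.log Z := by
        rw [integral_add hgπ (hπi.const_mul _),
          integral_const_mul, integral_const_mul, integral_sub (hg.div_const Z) hπi,
          integral_div, hπ1, div_self hZ.ne']
        ring

end

theorem stmt9_general {α : Type*} [MeasurableSpace α] (μ : Measure α)
    (πβ : α → ℝ) (Ar : α → ℝ) (Qh : α → ℝ) (μt : ℝ) (hμt : 0 < μt)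
    (hAmeas : Measurable Ar) (hQmeas : Measurable Qh)
    (hβnn : ∀ a, 0 ≤ πβ a) (hβint : Integrable πβ μ)
    (hAbdd : ∃ M, ∀ a, |Ar a| ≤ M)
    (hβmass : 0 < ∫ a in {a | Qh a ≤ 0}, πβ a ∂μ)
    (Z : ℝ)
    (hZ : Z = ∫ a, πβ a * Real.exp (Ar a / μt) * (if Qh a ≤ 0 then (1 : ℝ) else 0) ∂μ)
    (πstar : α → ℝ)
    (hπstar : ∀ a, πstar a
      = πβ a * Real.exp (Ar a / μt) * (if Qh a ≤ 0 then (1 : ℝ) else 0) / Z) :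
    ∀ π : α → ℝ, Measurable π → (∀ a, 0 ≤ π a) → Integrable π μ →
      (∫ a, π a ∂μ = 1) → (∫ a in {a | Qh a ≤ 0}, π a ∂μ = 1) →
      (∀ a, πβ a = 0 → π a = 0) →
      Integrable (fun a => π a * Ar a) μ →
      Integrable (fun a => π a * Real.log (π a / πβ a)) μ →
      (∫ a, π a * Ar a ∂μ) - μt * ∫ a, π a * Real.log (π a / πβ a) ∂μ
        ≤ (∫ a, πstar a * Ar a ∂μ)
          - μt * ∫ a, πstar a * Real.log (πstar a / πβ a) ∂μ := by
  intro π _ hπ hπi hπ1 hπset hπβ hπA hπkl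
  obtain ⟨M, hM⟩ := hAbdd
  set s := {a | Qh a ≤ 0}
  have hs : MeasurableSet s := hQmeas measurableSet_Iic
  have hweight : ∀ a, πβ a * Real.exp (Ar a / μt) * (if Qh a ≤ 0 then (1 : ℝ) else 0)
      = gibbsWeight πβ Ar μt s a := by
    intro a
    by_cases h : Qh a ≤ 0 <;> simp [gibbsWeight, s, h]
  simp only [hweight] at hZ hπstar
  subst hZ
  obtain rfl : πstar = fun a => gibbsWeight πβ Ar μt s a / ∫ a, gibbsWeight πβ Ar μt s a ∂μ :=
    funext hπstar
  have hg := integrable_gibbsWeight hβint hAmeas hM hμt hs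
  have hZ := integral_gibbsWeight_pos hβnn hg hβmass
  have hπout :=
    ae_notMem_eq_zero_of_setIntegral_eq_integral (ae_of_all _ hπ) hπi hs (hπset.trans hπ1.symm)
  calc klRegularizedObjective μ πβ Ar μt π
      ≤ μt * Real.log (∫ a, gibbsWeight πβ Ar μt s a ∂μ) :=
        klRegularizedObjective_le_mul_log_integral_gibbsWeight hμt hβnn hg hZ hπ hπi hπ1 hπout
          hπβ hπA hπkl
    _ = _ := (klRegularizedObjective_gibbsWeight_div_integral hμt.ne' hg hZ.ne' hAmeas hM).symm

/-- The solution of `max_π E_{a∼π}[A_r(a)] − μ·KL(π‖π_β)` subject to the support constraint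
`∫_{{a : Q_h(a) ≤ 0}} π(a) da = 1` is
`π*(a) ∝ π_β(a) exp(A_r(a)/μ) 𝟙[Q_h(a) ≤ 0]`, provided `π_β` gives positive mass to
`{a | Q_h(a) ≤ 0}`: every admissible density has objective value no larger than that of `π*`. -/
theorem stmt9 {α : Type*} [MeasurableSpace α] (μ : Measure α)
    (πβ : α → ℝ) (Ar : α → ℝ) (Qh : α → ℝ) (μt : ℝ) (hμt : 0 < μt)
    (hβmeas : Measurable πβ) (hAmeas : Measurable Ar) (hQmeas : Measurable Qh)
    (hβnn : ∀ a, 0 ≤ πβ a) (hβint : Integrable πβ μ) (hβprob : ∫ a, πβ a ∂μ = 1)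
    (hAbdd : ∃ M, ∀ a, |Ar a| ≤ M)
    (hβmass : 0 < ∫ a in {a | Qh a ≤ 0}, πβ a ∂μ)
    (Z : ℝ)
    (hZ : Z = ∫ a, πβ a * Real.exp (Ar a / μt) * (if Qh a ≤ 0 then (1 : ℝ) else 0) ∂μ)
    (πstar : α → ℝ)
    (hπstar : ∀ a, πstar a
      = πβ a * Real.exp (Ar a / μt) * (if Qh a ≤ 0 then (1 : ℝ) else 0) / Z) :
    ∀ π : α → ℝ, Measurable π → (∀ a, 0 ≤ π a) → Integrable π μ →
      (∫ a, π a ∂μ = 1) → (∫ a in {a | Qh a ≤ 0}, π a ∂μ = 1) →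
      (∀ a, πβ a = 0 → π a = 0) →
      Integrable (fun a => π a * Ar a) μ →
      Integrable (fun a => π a * Real.log (π a / πβ a)) μ →
      (∫ a, π a * Ar a ∂μ) - μt * ∫ a, π a * Real.log (π a / πβ a) ∂μ
        ≤ (∫ a, πstar a * Ar a ∂μ)
          - μt * ∫ a, πstar a * Real.log (πstar a / πβ a) ∂μ :=
  stmt9_general μ πβ Ar Qh μt hμt hAmeas hQmeas hβnn hβint hAbdd hβmass Z hZ πstar hπstar
end

section
/- Performance difference lemma: for any two policies π and π̃ in a discounted MDP, η(π) = η(π̃) + E_{s∼d^π}E_{a∼π(·|s)}[A^{π̃}(s,a)], where d^π(s) = (1−γ)∑_{t≥0} γ^t P(s_t = s | π) is the normalized discounted state visitation distribution and A^{π̃}(s,a) = Q^{π̃}(s,a) − V^{π̃}(s). -/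
/-!
Along a trajectory `x₀, x₁, …` of `π`, the definition of `Q^{π̃}` rewrites
`γᵗ A^{π̃}(xₜ, π xₜ)` as `γᵗ r(xₜ, π xₜ) + γᵗ⁺¹ V^{π̃}(xₜ₊₁) − γᵗ V^{π̃}(xₜ)`, so summing over `t`
telescopes to `V^π(x₀) − V^{π̃}(x₀)`. Averaging over `x₀ ∼ ρ` gives `η(π) − η(π̃)`, and
exchanging the sums over `t`, over `x₀` and over states identifies the average with
`(1 − γ)⁻¹ ∑ₛ d^π(s) A^{π̃}(s, π s)`.
-/

noncomputable section

/-- Discounted value function of a deterministic policy in a deterministic MDP. -/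
def Vpi {S A : Type*} (T : S → A → S) (r : S → A → ℝ) (γ : ℝ) (π : S → A) (s : S) : ℝ :=
  ∑' t : ℕ, γ ^ t * r (traj T π s t) (π (traj T π s t))

/-- Action-value function. -/
def Qpi {S A : Type*} (T : S → A → S) (r : S → A → ℝ) (γ : ℝ) (π : S → A) (s : S) (a : A) : ℝ :=
  r s a + γ * Vpi T r γ π (T s a)

/-- Advantage function. -/
def Api {S A : Type*} (T : S → A → S) (r : S → A → ℝ) (γ : ℝ) (π : S → A) (s : S) (a : A) : ℝ :=
  Qpi T r γ π s a - Vpi T r γ π s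

/-- Expected return under initial distribution `ρ`. -/
def eta {S A : Type*} [Fintype S] (T : S → A → S) (r : S → A → ℝ) (γ : ℝ) (ρ : S → ℝ)
    (π : S → A) : ℝ :=
  ∑ s : S, ρ s * Vpi T r γ π s

/-- Normalized discounted state visitation distribution
`d^π(s) = (1−γ) ∑_t γ^t P(s_t = s | π)`. -/
def dvisit {S A : Type*} [Fintype S] [DecidableEq S] (T : S → A → S) (γ : ℝ) (ρ : S → ℝ)
    (π : S → A) (s : S) : ℝ :=
  (1 - γ) * ∑' t : ℕ, γ ^ t * ∑ s0 : S, ρ s0 * (if traj T π s0 t = s then (1 : ℝ) else 0)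

open Finset

namespace MDP

variable {S A : Type*}

theorem summable_pow_mul_comp [Finite S] {γ : ℝ} (hγ : |γ| < 1) (x : ℕ → S) (h : S → ℝ) :
    Summable fun t => γ ^ t * h (x t) := by
  obtain ⟨M, hM⟩ := Finite.bddAbove_range fun s => |h s|
  refine Summable.of_norm_bounded ((summable_geometric_of_abs_lt_one hγ).abs.mul_right M)
    fun t => ?_
  rw [norm_mul, norm_pow, Real.norm_eq_abs, Real.norm_eq_abs, abs_pow]
  exact mul_le_mul_of_nonneg_left (hM ⟨x t, rfl⟩) (by positivity)

theorem Vpi_sub_Vpi_eq_tsum_Api [Finite S] (T : S → A → S) (r : S → A → ℝ) {γ : ℝ}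
    (hγ : |γ| < 1) (π πt : S → A) (s : S) :
    Vpi T r γ π s - Vpi T r γ πt s
      = ∑' t, γ ^ t * Api T r γ πt (traj T π s t) (π (traj T π s t)) := by
  set g : ℕ → ℝ := fun t => γ ^ t * Vpi T r γ πt (traj T π s t)
  have hg : Summable g := summable_pow_mul_comp hγ _ _
  have hg_succ : Summable fun t => g (t + 1) := (summable_nat_add_iff 1).mpr hg
  have hr := summable_pow_mul_comp hγ (traj T π s) fun x => r x (π x)
  have hA : ∀ t, γ ^ t * Api T r γ πt (traj T π s t) (π (traj T π s t))
      = γ ^ t * r (traj T π s t) (π (traj T π s t)) + (g (t + 1) - g t) := by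
    intro t
    simp only [g, Api, Qpi, traj, pow_succ]
    ring
  rw [tsum_congr hA, hr.tsum_add (hg_succ.sub hg), hg_succ.tsum_sub hg, hg.tsum_eq_zero_add]
  simp only [g, Vpi, traj, pow_zero, one_mul]
  ring

theorem sum_dvisit_mul [Fintype S] [DecidableEq S] (T : S → A → S) {γ : ℝ} (hγ : |γ| < 1)
    (ρ : S → ℝ) (π : S → A) (F : S → ℝ) :
    ∑ s, dvisit T γ ρ π s * F s = (1 - γ) * ∑ s₀, ρ s₀ * ∑' t, γ ^ t * F (traj T π s₀ t) := by
  have hsum : ∀ s₀ s, Summable fun t =>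
      ρ s₀ * (γ ^ t * ((if traj T π s₀ t = s then 1 else 0) * F s)) := fun s₀ s =>
    (summable_pow_mul_comp hγ (traj T π s₀) fun x => (if x = s then 1 else 0) * F s).mul_left _
  calc ∑ s, dvisit T γ ρ π s * F s
      = (1 - γ) * ∑ s, ∑' t, ∑ s₀,
          ρ s₀ * (γ ^ t * ((if traj T π s₀ t = s then 1 else 0) * F s)) := by
        rw [mul_sum]
        refine sum_congr rfl fun s _ => ?_
        rw [dvisit, mul_assoc, ← tsum_mul_right]
        congr 1
        refine tsum_congr fun t => ?_
        simp only [mul_sum, sum_mul]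
        exact sum_congr rfl fun s₀ _ => by ring
    _ = (1 - γ) * ∑ s₀, ∑' t, ∑ s,
          ρ s₀ * (γ ^ t * ((if traj T π s₀ t = s then 1 else 0) * F s)) := by
        simp only [Summable.tsum_finsetSum fun s₀ _ => hsum s₀ _]
        rw [sum_comm]
        simp only [Summable.tsum_finsetSum fun s _ => hsum _ s]
    _ = (1 - γ) * ∑ s₀, ρ s₀ * ∑' t, γ ^ t * F (traj T π s₀ t) := by
        simp only [← mul_sum, ite_mul, one_mul, zero_mul, sum_ite_eq, mem_univ, if_true,
          tsum_mul_left]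

end MDP

open MDP

theorem stmt11_general {S A : Type*} [Fintype S] [DecidableEq S]
    (T : S → A → S) (r : S → A → ℝ) (γ : ℝ) (hγ : γ ∈ Set.Ioo (0 : ℝ) 1)
    (ρ : S → ℝ)
    (π πt : S → A) :
    eta T r γ ρ π
      = eta T r γ ρ πt
        + (1 - γ)⁻¹ * ∑ s : S, dvisit T γ ρ π s * Api T r γ πt s (π s) := by
  obtain ⟨hγ0, hγ1⟩ := hγ
  have hγ_abs : |γ| < 1 := abs_lt.mpr ⟨by linarith, hγ1⟩
  rw [sum_dvisit_mul T hγ_abs ρ π fun s => Api T r γ πt s (π s),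
    inv_mul_cancel_left₀ (sub_ne_zero.mpr hγ1.ne'), eta, eta, ← sum_add_distrib]
  refine sum_congr rfl fun s _ => ?_
  rw [← Vpi_sub_Vpi_eq_tsum_Api T r hγ_abs π πt s]
  ring

/-- Performance difference lemma:
`η(π) = η(π̃) + E_{s∼d^π} E_{a∼π(·|s)}[A^{π̃}(s,a)]` (deterministic finite MDP, with the
visitation expectation normalized by `(1−γ)`, so the advantage term carries a `1/(1−γ)`). -/
theorem stmt11 {S A : Type*} [Fintype S] [DecidableEq S]
    (T : S → A → S) (r : S → A → ℝ) (γ : ℝ) (hγ : γ ∈ Set.Ioo (0 : ℝ) 1)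
    (ρ : S → ℝ) (hρnn : ∀ s, 0 ≤ ρ s) (hρ : ∑ s : S, ρ s = 1)
    (π πt : S → A) :
    eta T r γ ρ π
      = eta T r γ ρ πt
        + (1 - γ)⁻¹ * ∑ s : S, dvisit T γ ρ π s * Api T r γ πt s (π s) :=
  stmt11_general T r γ hγ ρ π πt
end
end

section
/- If a policy π satisfies that π(·|s) is supported on {a : Q_h*(s,a) ≤ 0} for every state s in the largest feasible region S_f* = {s : V_h*(s) ≤ 0}, then in a deterministic MDP, the trajectory under π from any s ∈ S_f* remains in S_f* forever and satisfies h(s_t) ≤ 0 for all t (forward invariance of the feasible region). -/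
/-- Forward invariance of the largest feasible region: if `π` selects, at every state `s` of
`S_f* = {s | V_h*(s) ≤ 0}`, an action with `Q_h*(s, π(s)) ≤ 0`, where
`Q_h*(s,a) = max{h(s), V_h*(T(s,a))}` and `V_h*(s) = min_a Q_h*(s,a)`, then the trajectory
under `π` from any `s ∈ S_f*` stays in `S_f*` forever and satisfies `h(s_t) ≤ 0` for all `t`. -/
theorem stmt13 {S A : Type*} [Fintype S] [Fintype A] [Nonempty A]
    (T : S → A → S) (h : S → ℝ)
    (Qstar : S → A → ℝ) (Vstar : S → ℝ)
    (hQ : ∀ s a, Qstar s a = max (h s) (Vstar (T s a)))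
    (hV : ∀ s, Vstar s = ⨅ a : A, Qstar s a)
    (π : S → A)
    (hπ : ∀ s, Vstar s ≤ 0 → Qstar s (π s) ≤ 0) :
    ∀ s : S, Vstar s ≤ 0 →
      ∀ t : ℕ, Vstar (traj T π s t) ≤ 0 ∧ h (traj T π s t) ≤ 0 := by
  intro s hs t
  induction t with
  | zero =>
      refine ⟨hs, ?_⟩
      have := hπ s hs
      rw [hQ] at this
      exact (max_le_iff.mp this).1
  | succ t ih =>
      have hq := hπ _ ih.1
      rw [hQ] at hq
      obtain ⟨hh, hv⟩ := max_le_iff.mp hq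
      refine ⟨hv, ?_⟩
      have hq' := hπ _ hv
      rw [hQ] at hq'
      exact (max_le_iff.mp hq').1
end

section
/- The reversed expectile loss L_rev^τ(u) = |τ − 𝟙(u > 0)|·u², applied as V ↦ argmin_V E[L_rev^τ(Q − V)] with τ ∈ (0.5, 1), yields the (1−τ)-expectile of the distribution of Q, and as τ → 1 this expectile converges to the essential infimum of Q when Q is bounded. -/
open MeasureTheory Filter Set Topology

/-!
For `τ ≤ 1` the reversed loss weighs the positive residual `Q - v` by `1 - τ` and the negative one
by `τ`; this is the `(1 - τ)`-expectile loss written with the indicator of the complementary event.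
Write `a = ess inf Q`. Since `Q - a ≥ 0` a.s., the risk of `a` is `(1 - τ) E[(Q - a)²]`, which tends
to `0` as `τ → 1`, while moving below `a` only adds `(1 - τ)(a - v)²`, so every minimizer lies
above `a`. A point `v ≥ c > a` has risk at least `τ E[(c - Q)₊²]`, which stays bounded away from
`0` because `Q < c` has positive probability; so for `τ` close to `1` minimizers lie below `c`.
-/

noncomputable def revExpectileLoss (τ u : ℝ) : ℝ :=
  |τ - (if u > 0 then (1 : ℝ) else 0)| * u ^ 2

noncomputable def expectileLoss (κ u : ℝ) : ℝ :=
  |κ - (if u < 0 then (1 : ℝ) else 0)| * u ^ 2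

lemma expectileLoss_one_sub (τ u : ℝ) : expectileLoss (1 - τ) u = revExpectileLoss τ u := by
  unfold expectileLoss revExpectileLoss
  rcases lt_trichotomy u 0 with hu | rfl | hu
  · rw [if_pos hu, if_neg hu.not_gt, ← abs_neg]
    ring_nf
  · simp
  · rw [if_neg hu.not_gt, if_pos hu, ← abs_neg]
    ring_nf

section Loss

variable {τ u : ℝ}

lemma revExpectileLoss_of_nonneg (hτ : τ ≤ 1) (hu : 0 ≤ u) :
    revExpectileLoss τ u = (1 - τ) * u ^ 2 := by
  unfold revExpectileLoss
  rcases hu.eq_or_lt with rfl | hu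
  · simp
  · rw [if_pos hu, abs_of_nonpos (by linarith), neg_sub]

lemma revExpectileLoss_of_nonpos (hτ : 0 ≤ τ) (hu : u ≤ 0) :
    revExpectileLoss τ u = τ * u ^ 2 := by
  rw [revExpectileLoss, if_neg hu.not_gt, sub_zero, abs_of_nonneg hτ]

lemma revExpectileLoss_nonneg (τ u : ℝ) : 0 ≤ revExpectileLoss τ u := by
  unfold revExpectileLoss
  positivity

lemma revExpectileLoss_le (τ u : ℝ) : revExpectileLoss τ u ≤ (|τ| + 1) * u ^ 2 := by
  have hind : |τ - (if u > 0 then (1 : ℝ) else 0)| ≤ |τ| + 1 := by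
    split_ifs
    · simpa using abs_sub τ (1 : ℝ)
    · simp
  exact mul_le_mul_of_nonneg_right hind (sq_nonneg u)

lemma measurable_revExpectileLoss (τ : ℝ) : Measurable (revExpectileLoss τ) :=
  ((measurable_const.sub (Measurable.ite measurableSet_Ioi measurable_const
    measurable_const)).abs).mul (measurable_id.pow_const 2)

end Loss

noncomputable def revExpectileRisk {Ω : Type*} [MeasurableSpace Ω] (μ : Measure Ω) (Q : Ω → ℝ)
    (τ v : ℝ) : ℝ :=
  ∫ ω, revExpectileLoss τ (Q ω - v) ∂μ

section Risk

variable {Ω : Type*} [MeasurableSpace Ω] {μ : Measure Ω} {Q : Ω → ℝ} {τ a c v : ℝ}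

lemma integrable_revExpectileLoss [IsFiniteMeasure μ] (hQ : MemLp Q 2 μ) (τ v : ℝ) :
    Integrable (fun ω => revExpectileLoss τ (Q ω - v)) μ := by
  refine Integrable.mono' ((hQ.sub (memLp_const v)).integrable_sq.const_mul (|τ| + 1))
    ((measurable_revExpectileLoss τ).comp_aemeasurable
      (hQ.aestronglyMeasurable.aemeasurable.sub_const v)).aestronglyMeasurable
    (ae_of_all _ fun ω => ?_)
  rw [Real.norm_of_nonneg (revExpectileLoss_nonneg _ _)]
  exact revExpectileLoss_le τ _

lemma revExpectileRisk_eq_of_ae_le (hτ : τ ≤ 1) (ha : ∀ᵐ ω ∂μ, a ≤ Q ω) :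
    revExpectileRisk μ Q τ a = (1 - τ) * ∫ ω, (Q ω - a) ^ 2 ∂μ := by
  rw [revExpectileRisk, ← integral_const_mul]
  refine integral_congr_ae (ha.mono fun ω hω => ?_)
  exact revExpectileLoss_of_nonneg hτ (sub_nonneg.mpr hω)

lemma revExpectileRisk_add_sq_le [IsProbabilityMeasure μ] (hQ : MemLp Q 2 μ) (hτ : τ ≤ 1)
    (ha : ∀ᵐ ω ∂μ, a ≤ Q ω) (hva : v ≤ a) :
    revExpectileRisk μ Q τ a + (1 - τ) * (a - v) ^ 2 ≤ revExpectileRisk μ Q τ v := by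
  have hpt : ∀ᵐ ω ∂μ, revExpectileLoss τ (Q ω - a) + (1 - τ) * (a - v) ^ 2
      ≤ revExpectileLoss τ (Q ω - v) := by
    filter_upwards [ha] with ω hω
    rw [revExpectileLoss_of_nonneg hτ (by linarith), revExpectileLoss_of_nonneg hτ (by linarith)]
    have hcross : 0 ≤ (1 - τ) * ((Q ω - a) * (a - v)) :=
      mul_nonneg (by linarith) (mul_nonneg (by linarith) (by linarith))
    nlinarith
  calc revExpectileRisk μ Q τ a + (1 - τ) * (a - v) ^ 2
      = ∫ ω, (revExpectileLoss τ (Q ω - a) + (1 - τ) * (a - v) ^ 2) ∂μ := by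
        rw [integral_add (integrable_revExpectileLoss hQ τ a) (integrable_const _), integral_const,
          probReal_univ, one_smul, revExpectileRisk]
    _ ≤ revExpectileRisk μ Q τ v :=
        integral_mono_ae ((integrable_revExpectileLoss hQ τ a).add (integrable_const _))
          (integrable_revExpectileLoss hQ τ v) hpt

lemma le_of_forall_revExpectileRisk_le [IsProbabilityMeasure μ] (hQ : MemLp Q 2 μ) (hτ : τ < 1)
    (ha : ∀ᵐ ω ∂μ, a ≤ Q ω) (hmin : ∀ w, revExpectileRisk μ Q τ v ≤ revExpectileRisk μ Q τ w) :
    a ≤ v := by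
  by_contra! hva
  have hgap : 0 < (1 - τ) * (a - v) ^ 2 := mul_pos (by linarith) (by nlinarith)
  linarith [revExpectileRisk_add_sq_le hQ hτ.le ha hva.le, hmin a]

lemma mul_integral_sq_max_sub_le_revExpectileRisk [IsFiniteMeasure μ] (hQ : MemLp Q 2 μ)
    (hτ₀ : 0 ≤ τ) (hcv : c ≤ v) :
    τ * ∫ ω, max (c - Q ω) 0 ^ 2 ∂μ ≤ revExpectileRisk μ Q τ v := by
  rw [revExpectileRisk, ← integral_const_mul]
  refine integral_mono (((memLp_const c).sub hQ).pos_part.integrable_sq.const_mul τ)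
    (integrable_revExpectileLoss hQ τ v) fun ω => ?_
  rcases le_or_gt c (Q ω) with hQc | hQc
  · simpa [max_eq_right (sub_nonpos.mpr hQc)] using revExpectileLoss_nonneg τ (Q ω - v)
  · rw [max_eq_left (by linarith), revExpectileLoss_of_nonpos hτ₀ (by linarith)]
    exact mul_le_mul_of_nonneg_left (by nlinarith) hτ₀

lemma integral_sq_max_sub_pos [IsFiniteMeasure μ] (hQ : MemLp Q 2 μ) (hc : μ {ω | Q ω < c} ≠ 0) :
    0 < ∫ ω, max (c - Q ω) 0 ^ 2 ∂μ := by
  rw [integral_pos_iff_support_of_nonneg (f := fun ω => max (c - Q ω) 0 ^ 2) (fun ω => sq_nonneg _)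
    ((memLp_const c).sub hQ).pos_part.integrable_sq, pos_iff_ne_zero]
  convert hc using 2
  ext ω
  simp

lemma measure_lt_ne_zero_of_essInf_lt (hQ : IsCoboundedUnder (· ≥ ·) (ae μ) Q)
    (hc : essInf Q μ < c) : μ {ω | Q ω < c} ≠ 0 := by
  intro h0
  refine (le_essInf_of_ae_le c ?_ hQ).not_gt hc
  rw [EventuallyLE, ae_iff]
  simpa only [not_le] using h0

theorem tendsto_essInf_of_revExpectileRisk_min [IsProbabilityMeasure μ] (hQ : MemLp Q 2 μ)
    (hbdd : IsBoundedUnder (· ≥ ·) (ae μ) Q) (hcobdd : IsCoboundedUnder (· ≥ ·) (ae μ) Q)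
    {m : ℝ → ℝ}
    (hmin : ∀ᶠ τ in 𝓝[<] 1, ∀ v, revExpectileRisk μ Q τ (m τ) ≤ revExpectileRisk μ Q τ v) :
    Tendsto m (𝓝[<] 1) (𝓝 (essInf Q μ)) := by
  have ha : ∀ᵐ ω ∂μ, essInf Q μ ≤ Q ω := ae_essInf_le hbdd
  refine tendsto_order.2 ⟨fun b hb => ?_, fun c hc => ?_⟩
  · filter_upwards [hmin, self_mem_nhdsWithin] with τ hτ hτ₁
    exact hb.trans_le (le_of_forall_revExpectileRisk_le hQ hτ₁ ha hτ)
  · set g := ∫ ω, max (c - Q ω) 0 ^ 2 ∂μ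
    have hg : 0 < g := integral_sq_max_sub_pos hQ (measure_lt_ne_zero_of_essInf_lt hcobdd hc)
    have hrisk : Tendsto (fun τ => (1 - τ) * ∫ ω, (Q ω - essInf Q μ) ^ 2 ∂μ) (𝓝[<] 1) (𝓝 0) := by
      refine tendsto_nhdsWithin_of_tendsto_nhds ?_
      simpa using ((tendsto_const_nhds (x := (1 : ℝ))).sub (tendsto_id (x := 𝓝 1))).mul_const
        (∫ ω, (Q ω - essInf Q μ) ^ 2 ∂μ)
    filter_upwards [hmin, hrisk.eventually_lt_const (half_pos hg),
      Ioo_mem_nhdsLT (by norm_num : (1 / 2 : ℝ) < 1)] with τ hτ hsmall hτ'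
    by_contra! hcm
    have hlower := mul_integral_sq_max_sub_le_revExpectileRisk (τ := τ) hQ (by linarith [hτ'.1]) hcm
    have hupper := (revExpectileRisk_eq_of_ae_le hτ'.2.le ha) ▸ hτ (essInf Q μ)
    nlinarith [hτ'.1]

end Risk

/-- Minimizing the reversed expectile loss `E[|τ − 𝟙(Q − V > 0)|(Q − V)²]` with `τ ∈ (1/2, 1)`
yields the `(1−τ)`-expectile of `Q` (i.e. the minimizer of the standard
`(1−τ)`-asymmetric-least-squares loss), and as `τ → 1` this minimizer converges to the
essential infimum of the bounded random variable `Q`. -/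
theorem stmt17 {Ω : Type*} [MeasurableSpace Ω] (μ : Measure Ω) [IsProbabilityMeasure μ]
    (Q : Ω → ℝ) (hmeas : Measurable Q) (M : ℝ) (hbdd : ∀ ω, |Q ω| ≤ M)
    (m : ℝ → ℝ)
    (hmin : ∀ τ ∈ Set.Ioo (1 / 2 : ℝ) 1, ∀ v : ℝ,
      (∫ ω, |τ - (if Q ω - m τ > 0 then (1 : ℝ) else 0)| * (Q ω - m τ) ^ 2 ∂μ)
        ≤ ∫ ω, |τ - (if Q ω - v > 0 then (1 : ℝ) else 0)| * (Q ω - v) ^ 2 ∂μ) :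
    (∀ τ ∈ Set.Ioo (1 / 2 : ℝ) 1, ∀ v : ℝ,
      (∫ ω, |(1 - τ) - (if Q ω - m τ < 0 then (1 : ℝ) else 0)| * (Q ω - m τ) ^ 2 ∂μ)
        ≤ ∫ ω, |(1 - τ) - (if Q ω - v < 0 then (1 : ℝ) else 0)| * (Q ω - v) ^ 2 ∂μ) ∧
    Filter.Tendsto m (nhdsWithin 1 (Set.Ioo (1 / 2 : ℝ) 1)) (nhds (essInf Q μ)) := by
  have hQ_mem : ∀ ω, Q ω ∈ Icc (-M) M := fun ω => abs_le.mp (hbdd ω)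
  have hQ : MemLp Q 2 μ := memLp_of_bounded (ae_of_all _ hQ_mem) hmeas.aestronglyMeasurable 2
  refine ⟨fun τ hτ v => ?_, ?_⟩
  · change ∫ ω, expectileLoss (1 - τ) (Q ω - m τ) ∂μ ≤ ∫ ω, expectileLoss (1 - τ) (Q ω - v) ∂μ
    simp only [expectileLoss_one_sub]
    exact hmin τ hτ v
  · have hmin' : ∀ᶠ τ in 𝓝[<] 1, ∀ v, revExpectileRisk μ Q τ (m τ) ≤ revExpectileRisk μ Q τ v :=
      eventually_of_mem (Ioo_mem_nhdsLT (by norm_num)) hmin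
    have hbelow : IsBoundedUnder (· ≥ ·) (ae μ) Q := ⟨-M, ae_of_all _ fun ω => (hQ_mem ω).1⟩
    have habove : IsBoundedUnder (· ≤ ·) (ae μ) Q := ⟨M, ae_of_all _ fun ω => (hQ_mem ω).2⟩
    exact (tendsto_essInf_of_revExpectileRisk_min hQ hbelow habove.isCoboundedUnder_ge
      hmin').mono_left (nhdsWithin_mono _ Ioo_subset_Iio_self)
end

section
/- Expectiles are monotone in their level: for a bounded random variable X and 0 < κ₁ < κ₂ < 1, the κ₁-expectile of X is less than or equal to the κ₂-expectile of X, with equality iff X is almost surely constant. -/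
open MeasureTheory

/-- Expectiles are monotone in their level: if `m₁`, `m₂` solve the first-order expectile
conditions `κᵢ E[(X − mᵢ)₊] = (1 − κᵢ) E[(mᵢ − X)₊]` for `0 < κ₁ < κ₂ < 1` and a bounded
random variable `X`, then `m₁ ≤ m₂`, with equality iff `X` is almost surely constant. -/
theorem stmt18 {Ω : Type*} [MeasurableSpace Ω] (μ : Measure Ω) [IsProbabilityMeasure μ]
    (X : Ω → ℝ) (hmeas : Measurable X) (M : ℝ) (hbdd : ∀ ω, |X ω| ≤ M)
    (κ₁ κ₂ m₁ m₂ : ℝ) (h0 : 0 < κ₁) (h12 : κ₁ < κ₂) (h1 : κ₂ < 1)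
    (hm1 : κ₁ * ∫ ω, max (X ω - m₁) 0 ∂μ = (1 - κ₁) * ∫ ω, max (m₁ - X ω) 0 ∂μ)
    (hm2 : κ₂ * ∫ ω, max (X ω - m₂) 0 ∂μ = (1 - κ₂) * ∫ ω, max (m₂ - X ω) 0 ∂μ) :
    m₁ ≤ m₂ ∧ (m₁ = m₂ ↔ ∃ c : ℝ, ∀ᵐ ω ∂μ, X ω = c) := by
  have hXint : Integrable X μ :=
    (integrable_const M).mono' hmeas.aestronglyMeasurable
      (Filter.Eventually.of_forall fun ω => by simpa using hbdd ω)
  have hInt1 : ∀ m : ℝ, Integrable (fun ω => max (X ω - m) 0) μ := fun m =>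
    (integrable_const (M + |m|)).mono'
      ((hmeas.sub measurable_const).max measurable_const).aestronglyMeasurable
      (Filter.Eventually.of_forall fun ω => by
        have h := abs_le.mp (hbdd ω)
        have h2 := le_abs_self m
        have h2' := neg_abs_le m
        have h3 := abs_nonneg (X ω)
        have h3' := abs_nonneg m
        have h4 := hbdd ω
        rw [Real.norm_eq_abs, abs_of_nonneg (le_max_right _ _)]
        apply max_le <;> linarith)
  have hInt2 : ∀ m : ℝ, Integrable (fun ω => max (m - X ω) 0) μ := fun m =>
    (integrable_const (M + |m|)).mono'
      (((measurable_const.sub hmeas)).max measurable_const).aestronglyMeasurable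
      (Filter.Eventually.of_forall fun ω => by
        have h := abs_le.mp (hbdd ω)
        have h2 := le_abs_self m
        have h2' := neg_abs_le m
        have h3 := abs_nonneg (X ω)
        have h3' := abs_nonneg m
        have h4 := hbdd ω
        rw [Real.norm_eq_abs, abs_of_nonneg (le_max_right _ _)]
        apply max_le <;> linarith)
  set F : ℝ → ℝ := fun m => ∫ ω, max (X ω - m) 0 ∂μ with hF
  set G : ℝ → ℝ := fun m => ∫ ω, max (m - X ω) 0 ∂μ with hG
  have hFnn : ∀ m, 0 ≤ F m := fun m =>
    integral_nonneg fun ω => le_max_right _ _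
  have hGnn : ∀ m, 0 ≤ G m := fun m =>
    integral_nonneg fun ω => le_max_right _ _
  have hdiff : ∀ m : ℝ, F m - G m = (∫ ω, X ω ∂μ) - m := by
    intro m
    rw [hF, hG]
    rw [← integral_sub (hInt1 m) (hInt2 m)]
    have heq : (fun ω => max (X ω - m) 0 - max (m - X ω) 0) = fun ω => X ω - m := by
      funext ω
      rcases le_total (X ω) m with h | h
      · rw [max_eq_right (by linarith), max_eq_left (by linarith)]; ring
      · rw [max_eq_left (by linarith), max_eq_right (by linarith)]; ring
    rw [heq, integral_sub hXint (integrable_const m), integral_const]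
    simp
  have hFanti : ∀ {m m' : ℝ}, m ≤ m' → F m' ≤ F m := by
    intro m m' h
    exact integral_mono (hInt1 m') (hInt1 m) fun ω => max_le_max (by linarith) le_rfl
  have hGmono : ∀ {m m' : ℝ}, m ≤ m' → G m ≤ G m' := by
    intro m m' h
    exact integral_mono (hInt2 m) (hInt2 m') fun ω => max_le_max (by linarith) le_rfl
  -- strict decrease of m ↦ κ F m - (1-κ) G m
  have hstrict : ∀ (κ m m' : ℝ), 0 < κ → κ < 1 → m < m' →
      κ * F m' - (1 - κ) * G m' < κ * F m - (1 - κ) * G m := by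
    intro κ m m' hκ0 hκ1 hmm
    have ha : 0 ≤ F m - F m' := by linarith [hFanti hmm.le]
    have hb : 0 ≤ G m' - G m := by linarith [hGmono hmm.le]
    have hsum : (F m - F m') + (G m' - G m) = m' - m := by
      have h1 := hdiff m
      have h2 := hdiff m'
      linarith
    rcases lt_or_ge 0 (F m - F m') with hpos | hz
    · nlinarith [mul_pos hκ0 hpos, mul_nonneg (by linarith : (0:ℝ) ≤ 1 - κ) hb]
    · have hbp : 0 < G m' - G m := by linarith
      nlinarith [mul_pos (by linarith : (0:ℝ) < 1 - κ) hbp, mul_nonneg hκ0.le ha]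
  -- inequality m₁ ≤ m₂
  have hle : m₁ ≤ m₂ := by
    by_contra hlt
    push_neg at hlt
    have h1' : κ₁ * F m₁ - (1 - κ₁) * G m₁ = 0 := by rw [hF, hG]; linarith [hm1]
    have h2' : κ₂ * F m₂ - (1 - κ₂) * G m₂ = 0 := by rw [hF, hG]; linarith [hm2]
    have hs := hstrict κ₂ m₂ m₁ (by linarith) h1 hlt
    have hmono : κ₁ * F m₁ - (1 - κ₁) * G m₁ ≤ κ₂ * F m₁ - (1 - κ₂) * G m₁ := by
      nlinarith [hFnn m₁, hGnn m₁]
    linarith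
  refine ⟨hle, ?_, ?_⟩
  · -- m₁ = m₂ → a.s. constant
    intro heq
    subst heq
    have h1' : κ₁ * F m₁ = (1 - κ₁) * G m₁ := hm1
    have h2' : κ₂ * F m₁ = (1 - κ₂) * G m₁ := hm2
    have hFG : F m₁ + G m₁ = 0 := by
      have : (κ₂ - κ₁) * (F m₁ + G m₁) = 0 := by linarith [h1', h2']
      have hne : κ₂ - κ₁ ≠ 0 := by linarith
      exact by
        rcases mul_eq_zero.mp this with h | h
        · exact absurd h hne
        · exact h
    have habs : (∫ ω, |X ω - m₁| ∂μ) = 0 := by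
      have heq2 : (fun ω => |X ω - m₁|) = fun ω => max (X ω - m₁) 0 + max (m₁ - X ω) 0 := by
        funext ω
        rcases le_total (X ω) m₁ with h | h
        · rw [max_eq_right (by linarith), max_eq_left (by linarith),
            abs_of_nonpos (by linarith)]; ring
        · rw [max_eq_left (by linarith), max_eq_right (by linarith),
            abs_of_nonneg (by linarith)]; ring
      rw [heq2, integral_add (hInt1 m₁) (hInt2 m₁)]
      rw [hF, hG] at hFG
      exact hFG
    have hint : Integrable (fun ω => |X ω - m₁|) μ := (hXint.sub (integrable_const m₁)).abs
    have := (integral_eq_zero_iff_of_nonneg (fun ω => abs_nonneg _) hint).mp habs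
    refine ⟨m₁, ?_⟩
    filter_upwards [this] with ω hω
    have : |X ω - m₁| = 0 := hω
    have := abs_eq_zero.mp this
    linarith
  · -- a.s. constant → m₁ = m₂
    rintro ⟨c, hc⟩
    have hval : ∀ (m : ℝ), F m = max (c - m) 0 ∧ G m = max (m - c) 0 := by
      intro m
      constructor
      · show (∫ ω, max (X ω - m) 0 ∂μ) = max (c - m) 0
        have hcongr : (fun ω => max (X ω - m) 0) =ᵐ[μ] fun _ => max (c - m) 0 := by
          filter_upwards [hc] with ω hω; rw [hω]
        rw [integral_congr_ae hcongr]
        simp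
      · show (∫ ω, max (m - X ω) 0 ∂μ) = max (m - c) 0
        have hcongr : (fun ω => max (m - X ω) 0) =ᵐ[μ] fun _ => max (m - c) 0 := by
          filter_upwards [hc] with ω hω; rw [hω]
        rw [integral_congr_ae hcongr]
        simp
    have hmc : ∀ (κ m : ℝ), 0 < κ → κ < 1 →
        κ * F m = (1 - κ) * G m → m = c := by
      intro κ m hκ0 hκ1 hmeq
      obtain ⟨hFm, hGm⟩ := hval m
      rw [hFm, hGm] at hmeq
      rcases lt_trichotomy m c with h | h | h
      · rw [max_eq_left (by linarith), max_eq_right (by linarith)] at hmeq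
        nlinarith
      · exact h
      · rw [max_eq_right (by linarith), max_eq_left (by linarith)] at hmeq
        nlinarith
    rw [hmc κ₁ m₁ h0 (by linarith) hm1, hmc κ₂ m₂ (by linarith) h1 hm2]
end
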